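/- For every σ, τ ∈ S_p, Q^(p) (V_σ V'_τ) Q^(p−1) = 0 and Q^(p−1) (V_σ V'_τ) Q^(p) = 0. Consequently the two ideals M̃^(p) := span_ℂ{(V_σ V'_τ) Q^(p) (V_π V'_ρ)} and M̃^(p−1) := span_ℂ{(V_σ V'_τ) Q^(p−1) (V_π V'_ρ)} of A^d_{p,p} satisfy M̃^(p) · M̃^(p−1) = 0. -/

import Mathlib

open Matrix Kronecker

namespace WBA

/-- Configurations of `p` qudits of local dimension `d`. -/
abbrev Conf (d p : ℕ) := Fin p → Fin d

/-- Operators on `H = (ℂ^d)^{⊗ 2p}`, indexed by pairs (unprimed configuration, primed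
configuration). -/
abbrev Op (d p : ℕ) := Matrix (Conf d p × Conf d p) (Conf d p × Conf d p) ℂ

/-- The projector `P⁺_{a,c'}` onto the maximally entangled state between unprimed system `a`
and primed system `c`, tensored with the identity elsewhere. -/
noncomputable def Pplus (d p : ℕ) (a c : Fin p) : Op d p :=
  Matrix.of fun xy uv =>
    if xy.1 a = xy.2 c ∧ uv.1 a = uv.2 c ∧ (∀ j, j ≠ a → xy.1 j = uv.1 j) ∧
        (∀ j, j ≠ c → xy.2 j = uv.2 j) then
      (d : ℂ)⁻¹
    else 0

/-- `d • P⁺_{a,c'}`, i.e. the partially transposed swap `V^{t_{c'}}_{(a,c')}`. -/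
noncomputable def arc (d p : ℕ) (a c : Fin p) : Op d p := (d : ℂ) • Pplus d p a c

/-- `V^(k) = ∏_{j=p-k+1}^{p} (d • P⁺_{j,j'})` (product over the last `k` systems;
`V^(0) = 1`). -/
noncomputable def Vop (d p k : ℕ) : Op d p :=
  (((List.range p).filter (fun j => decide (p - k ≤ j))).map
    (fun j => if h : j < p then arc d p ⟨j, h⟩ ⟨j, h⟩ else 1)).prod

/-- `Q^(p) = d^{-p} V^(p)` and `Q^(k) = d^{-k} V^(k) - d^{-(k+1)} V^(k+1)` for `k < p`. -/
noncomputable def Qop (d p k : ℕ) : Op d p :=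
  if k = p then ((d : ℂ) ^ p)⁻¹ • Vop d p p
  else ((d : ℂ) ^ k)⁻¹ • Vop d p k - ((d : ℂ) ^ (k + 1))⁻¹ • Vop d p (k + 1)

/-- Permutation matrix on `(ℂ^d)^{⊗ n}`: sends `e_v` to `e_{v ∘ σ⁻¹}`. -/
noncomputable def permMat (d n : ℕ) (σ : Equiv.Perm (Fin n)) :
    Matrix (Fin n → Fin d) (Fin n → Fin d) ℂ :=
  Matrix.of fun x u => if x = u ∘ ⇑σ⁻¹ then 1 else 0

/-- `V_σ`: permutation of the unprimed factors, identity on the primed factors. -/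
noncomputable def VL (d p : ℕ) (σ : Equiv.Perm (Fin p)) : Op d p :=
  (permMat d p σ) ⊗ₖ (1 : Matrix (Conf d p) (Conf d p) ℂ)

/-- `V'_τ`: permutation of the primed factors, identity on the unprimed factors. -/
noncomputable def VR (d p : ℕ) (τ : Equiv.Perm (Fin p)) : Op d p :=
  (1 : Matrix (Conf d p) (Conf d p) ℂ) ⊗ₖ (permMat d p τ)

/-- Identification of `H` with `(ℂ^d)^{⊗ (p+p)}`. -/
def glue (d p : ℕ) : (Conf d p × Conf d p) ≃ (Fin (p + p) → Fin d) :=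
  (Equiv.sumArrowEquivProdArrow (Fin p) (Fin p) (Fin d)).symm.trans
    (Equiv.arrowCongr finSumFinEquiv (Equiv.refl (Fin d)))

/-- The permutation operator `W_π`, `π ∈ S_{2p}`, permuting all `2p` tensor factors of `H`. -/
noncomputable def Wfull (d p : ℕ) (π : Equiv.Perm (Fin (p + p))) : Op d p :=
  (permMat d (p + p) π).submatrix (glue d p) (glue d p)

/-- Partial transpose over the `p` primed factors:
`⟨x,y|M^Γ|u,v⟩ = ⟨x,v|M|u,y⟩`. -/
noncomputable def ptrans (d p : ℕ) (M : Op d p) : Op d p :=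
  Matrix.of fun xy uv => M (xy.1, uv.2) (uv.1, xy.2)

/-- The algebra `A^d_{p,p}` of partially transposed permutation operators, as a
linear subspace of `End(H)`. -/
noncomputable def Apt (d p : ℕ) : Submodule ℂ (Op d p) :=
  Submodule.span ℂ {M | ∃ π : Equiv.Perm (Fin (p + p)), M = ptrans d p (Wfull d p π)}

/-- Extension of an operator on systems `1,…,p-r,1',…,(p-r)'` by the identity on the
remaining systems. -/
noncomputable def embed (d p r : ℕ) (M : Op d (p - r)) : Op d p :=
  Matrix.of fun xy uv =>
    M (xy.1 ∘ Fin.castLE (Nat.sub_le p r), xy.2 ∘ Fin.castLE (Nat.sub_le p r))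
      (uv.1 ∘ Fin.castLE (Nat.sub_le p r), uv.2 ∘ Fin.castLE (Nat.sub_le p r)) *
    (if ∀ j : Fin p, p - r ≤ (j : ℕ) → xy.1 j = uv.1 j ∧ xy.2 j = uv.2 j then 1 else 0)

/-- The ideal `M̃^(k) = span{ V_σ V'_τ Q^(k) V_π V'_ρ }` of `A^d_{p,p}`. -/
noncomputable def Mtil (d p k : ℕ) : Submodule ℂ (Op d p) :=
  Submodule.span ℂ {M | ∃ σ τ π ρ : Equiv.Perm (Fin p),
    M = VL d p σ * VR d p τ * Qop d p k * (VL d p π * VR d p ρ)}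

/-- Labels for the two irreps of `S_2`: symmetric `S` and antisymmetric `A`. -/
inductive SA
  | S
  | A
deriving DecidableEq

instance instFintypeSA : Fintype SA := ⟨{SA.S, SA.A}, fun x => by cases x <;> simp⟩

/-- The swap operator on `ℂ^d ⊗ ℂ^d`. -/
noncomputable def Fsw (d : ℕ) : Matrix (Conf d 2) (Conf d 2) ℂ :=
  Matrix.of fun x u => if x 0 = u 1 ∧ x 1 = u 0 then 1 else 0

/-- Symmetric and antisymmetric projectors on `ℂ^d ⊗ ℂ^d`. -/
noncomputable def Esm (d : ℕ) : SA → Matrix (Conf d 2) (Conf d 2) ℂ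
  | SA.S => (2 : ℂ)⁻¹ • (1 + Fsw d)
  | SA.A => (2 : ℂ)⁻¹ • (1 - Fsw d)

/-- `E_i ⊗ E_j` on `H = (ℂ^d)^{⊗4}`. -/
noncomputable def EE (d : ℕ) (i j : SA) : Op d 2 := (Esm d i) ⊗ₖ (Esm d j)

/-- `E_i ⊗ 1` on `H = (ℂ^d)^{⊗4}`. -/
noncomputable def EId (d : ℕ) (i : SA) : Op d 2 :=
  (Esm d i) ⊗ₖ (1 : Matrix (Conf d 2) (Conf d 2) ℂ)

/-- Multiplicities `m_S = d(d+1)/2`, `m_A = d(d-1)/2` (real valued). -/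
noncomputable def mR (d : ℕ) : SA → ℝ
  | SA.S => (d : ℝ) * ((d : ℝ) + 1) / 2
  | SA.A => (d : ℝ) * ((d : ℝ) - 1) / 2

/-- Multiplicities `m_S = d(d+1)/2`, `m_A = d(d-1)/2` (complex valued). -/
noncomputable def mC (d : ℕ) : SA → ℂ
  | SA.S => (d : ℂ) * ((d : ℂ) + 1) / 2
  | SA.A => (d : ℂ) * ((d : ℂ) - 1) / 2

/-- `V^(1) = d • P⁺_{2,2'}` for `p = 2`. -/
noncomputable def V1 (d : ℕ) : Op d 2 := arc d 2 1 1

/-- `V^(2) = d² • P⁺_{2,2'} P⁺_{1,1'}` for `p = 2`. -/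
noncomputable def V2 (d : ℕ) : Op d 2 := arc d 2 1 1 * arc d 2 0 0

/-- `Q^(2) = d^{-2} V^(2)` for `p = 2`. -/
noncomputable def Q2 (d : ℕ) : Op d 2 := ((d : ℂ) ^ 2)⁻¹ • V2 d

/-- `Q^(1) = d^{-1} V^(1) - d^{-2} V^(2)` for `p = 2`. -/
noncomputable def Q1 (d : ℕ) : Op d 2 :=
  (d : ℂ)⁻¹ • V1 d - ((d : ℂ) ^ 2)⁻¹ • V2 d

/-- `G^(2)_{kl} = (d²/√(m_k m_l)) (E_k ⊗ 1) Q^(2) (E_l ⊗ 1)`. -/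
noncomputable def G2 (d : ℕ) (k l : SA) : Op d 2 :=
  ((d : ℂ) ^ 2 / ((Real.sqrt (mR d k * mR d l) : ℝ) : ℂ)) • (EId d k * Q2 d * EId d l)

/-- `G^(2) = G^(2)_{SS} + G^(2)_{AA}`. -/
noncomputable def G2sum (d : ℕ) : Op d 2 := G2 d SA.S SA.S + G2 d SA.A SA.A

/-- The Gram coefficients `b_{SS} = (d+2)/(4d)`, `b_{SA} = b_{AS} = 1/4`,
`b_{AA} = (d-2)/(4d)`. -/
noncomputable def bc (d : ℕ) : SA → SA → ℂ
  | SA.S, SA.S => ((d : ℂ) + 2) / (4 * (d : ℂ))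
  | SA.S, SA.A => 1 / 4
  | SA.A, SA.S => 1 / 4
  | SA.A, SA.A => ((d : ℂ) - 2) / (4 * (d : ℂ))

/-- `Ĝ^(1)_{[ij][kl]} = (E_i ⊗ E_j) Q^(1) (E_k ⊗ E_l)`. -/
noncomputable def Ghat1 (d : ℕ) (i j k l : SA) : Op d 2 :=
  EE d i j * Q1 d * EE d k l

/-- `G^(1)_{[ij][kl]} = b_{ij}⁻¹ Ĝ^(1)_{[ij][kl]}`. -/
noncomputable def G1 (d : ℕ) (i j k l : SA) : Op d 2 := (bc d i j)⁻¹ • Ghat1 d i j k l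

/-- `G^(1) = Σ_{ij} G^(1)_{[ij][ij]}`. -/
noncomputable def G1sum (d : ℕ) : Op d 2 := ∑ i : SA, ∑ j : SA, G1 d i j i j

/-- `G^(0)_{ij} = E_i⊗E_j - b_{ij}⁻¹ (E_i⊗E_j)Q^(1)(E_i⊗E_j)
- δ_{ij} (d²/m_i) (E_i⊗1)Q^(2)(E_i⊗1)`. -/
noncomputable def G0 (d : ℕ) (i j : SA) : Op d 2 :=
  EE d i j - (bc d i j)⁻¹ • (EE d i j * Q1 d * EE d i j) -
    (if i = j then (d : ℂ) ^ 2 / mC d i else 0) • (EId d i * Q2 d * EId d i)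


/-!
Write `Φ` for the unnormalised maximally entangled vector `∑_z |z⟩ ⊗ |z⟩`, so that
`V^(p) = |Φ⟩⟨Φ|` and `Q^(p) = d^{-p} |Φ⟩⟨Φ|`. Since `⟨Φ| V_σ V'_τ = ⟨Φ_ρ|` with `ρ = σ⁻¹τ` and
`Φ_ρ = ∑_z |z⟩ ⊗ |z ∘ ρ⟩`, everything reduces to the identity
`d ⟨Φ_ρ| V^(p-1) = ⟨Φ_ρ|Φ⟩ ⟨Φ|`, which says `Q^(p) X V^(p-1) = d^{-1} Q^(p) X V^(p)`.
Entrywise it is a count of configurations `z` with `z j = z (ρ j)` for all sites `j` but one: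
such a `z` is automatically `ρ`-invariant, because `ρ` preserves the number of sites carrying
any given value, and the `d` possible values at the free site occur equally often. The mirrored
identity follows by transposition, and the two ideals annihilate each other because a product
of their generators contains `Q^(p) V_π V'_ρ Q^(p-1)` as a factor.
-/

section Invariant

open Finset Equiv

variable {α β : Type*} [Fintype α] [DecidableEq α] [Fintype β] [DecidableEq β]

omit [DecidableEq α] [Fintype β] in
theorem apply_perm_eq_of_forall_ne (ρ : Perm α) (o : α) (z : α → β)
    (h : ∀ j ≠ o, z j = z (ρ j)) : z (ρ o) = z o := by
  by_contra hne
  have hcard : #{j | z (ρ j) = z (ρ o)} = #{j | z j = z (ρ o)} :=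
    card_bijective ρ ρ.bijective (by simp)
  have hssub : ({j | z j = z (ρ o)} : Finset α) ⊂ ({j | z (ρ j) = z (ρ o)} : Finset α) := by
    refine ssubset_iff_of_subset (fun j hj => ?_) |>.mpr ⟨o, by simp, by simpa using Ne.symm hne⟩
    simp only [mem_filter, mem_univ, true_and] at hj ⊢
    rw [← hj, h j (by rintro rfl; exact hne hj.symm)]
  exact (card_lt_card hssub).ne' hcard

theorem card_mul_card_invariant_apply_eq (ρ : Perm α) (o : α) (a : β) :
    Fintype.card β * #{z : α → β | z o = a ∧ z ∘ ρ = z} = #{z : α → β | z ∘ ρ = z} := by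
  have hfiber (b : β) :
      #{z : α → β | z o = b ∧ z ∘ ρ = z} = #{z : α → β | z o = a ∧ z ∘ ρ = z} :=
    card_bijective (fun z => swap a b ∘ z) (swap a b).bijective.comp_left (by
      intro z; simp [swap_apply_eq_iff, funext_iff, (swap a b).injective.eq_iff])
  conv_rhs => rw [card_eq_sum_card_fiberwise (f := fun z => z o) (t := univ) (by simp)]
  simp [filter_filter, and_comm, hfiber]

theorem card_mul_card_invariant_off_apply_eq (ρ : Perm α) (o : α) (a b : β) :
    Fintype.card β * #{z : α → β | z o = a ∧ z (ρ o) = b ∧ ∀ j ≠ o, z j = z (ρ j)}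
      = if a = b then #{z : α → β | z ∘ ρ = z} else 0 := by
  have hcond (z : α → β) : (z o = a ∧ z (ρ o) = b ∧ ∀ j ≠ o, z j = z (ρ j))
      ↔ a = b ∧ z o = a ∧ z ∘ ρ = z := by
    simp only [funext_iff, Function.comp_apply]
    refine ⟨fun ⟨ha, hb, h⟩ => ?_,
      fun ⟨hab, ha, h⟩ => ⟨ha, by rw [h, ha, hab], fun j _ => (h j).symm⟩⟩
    have hρo := apply_perm_eq_of_forall_ne ρ o z h
    refine ⟨by rw [← ha, ← hb, hρo], ha, fun j => ?_⟩
    rcases eq_or_ne j o with rfl | hj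
    exacts [hρo, (h j hj).symm]
  simp only [hcond]
  split_ifs with hab
  · simpa [hab] using card_mul_card_invariant_apply_eq ρ o b
  · simp [hab]

end Invariant

section PairOp

variable {d p : ℕ}

/-- `pairOp d p S = ∏_{j ∈ S} d • P⁺_{j,j'}`: it contracts the pairs `(j, j')` with `j ∈ S`
and acts as the identity on the other systems. -/
def pairOp (d p : ℕ) (S : Finset (Fin p)) : Op d p :=
  Matrix.of fun xy uv => if (∀ j ∈ S, xy.1 j = xy.2 j ∧ uv.1 j = uv.2 j) ∧
    (∀ j ∉ S, xy.1 j = uv.1 j ∧ xy.2 j = uv.2 j) then 1 else 0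

theorem pairOp_mul_pairOp {S T : Finset (Fin p)} (h : Disjoint S T) :
    pairOp d p S * pairOp d p T = pairOp d p (S ∪ T) := by
  have hST := Finset.disjoint_left.mp h
  ext ⟨x, y⟩ ⟨u, v⟩
  rw [Matrix.mul_apply, Finset.sum_eq_single (fun j => if j ∈ S then u j else x j,
    fun j => if j ∈ S then v j else y j)]
  · simp only [pairOp, Matrix.of_apply]
    grind
  · rintro ⟨z, w⟩ - hzw
    simp only [pairOp, Matrix.of_apply, mul_ite, mul_one, mul_zero]
    split_ifs <;> try rfl
    refine absurd (Prod.ext (funext fun j => ?_) (funext fun j => ?_)) hzw <;> grind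
  · simp

theorem pairOp_empty : pairOp d p ∅ = 1 := by
  ext ⟨x, y⟩ ⟨u, v⟩
  simp [pairOp, Matrix.one_apply, Prod.ext_iff, funext_iff, forall_and]

theorem arc_self_eq_pairOp [NeZero d] (a : Fin p) : arc d p a a = pairOp d p {a} := by
  ext ⟨x, y⟩ ⟨u, v⟩
  simp only [arc, Pplus, pairOp, Matrix.smul_apply, Matrix.of_apply, smul_eq_mul, mul_ite,
    mul_inv_cancel₀ (NeZero.ne (d : ℂ)), mul_zero, Finset.mem_singleton]
  grind

theorem prod_map_arc_eq_pairOp [NeZero d] {l : List ℕ} (hl : l.Nodup) :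
    (l.map fun j => if h : j < p then arc d p ⟨j, h⟩ ⟨j, h⟩ else 1).prod
      = pairOp d p {i : Fin p | (i : ℕ) ∈ l} := by
  induction l with
  | nil => simpa using pairOp_empty.symm
  | cons a l ih =>
    rw [List.nodup_cons] at hl
    rw [List.map_cons, List.prod_cons, ih hl.2]
    split_ifs with ha
    · rw [arc_self_eq_pairOp, pairOp_mul_pairOp (by simpa using hl.1)]
      congr 1
      ext i
      simp [Fin.ext_iff]
    · rw [one_mul]
      congr 1
      ext i
      simp only [Finset.mem_filter, Finset.mem_univ, true_and, List.mem_cons]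
      exact (or_iff_right (by omega)).symm

theorem Vop_eq_pairOp [NeZero d] (k : ℕ) : Vop d p k = pairOp d p {i : Fin p | p - k ≤ i} := by
  rw [Vop, prod_map_arc_eq_pairOp (List.nodup_range.filter _)]
  congr 1
  ext i
  simp

end PairOp

section Permutations

variable {d p : ℕ}

theorem permMat_mul (n : ℕ) (σ τ : Equiv.Perm (Fin n)) :
    permMat d n σ * permMat d n τ = permMat d n (σ * τ) := by
  ext x u
  rw [mul_apply, Finset.sum_eq_single (u ∘ ⇑τ⁻¹)]
  · simp [permMat, Function.comp_assoc]
  · intro y _ hy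
    rw [permMat, permMat, of_apply, of_apply, if_neg hy, mul_zero]
  · simp

theorem permMat_transpose (n : ℕ) (σ : Equiv.Perm (Fin n)) :
    (permMat d n σ)ᵀ = permMat d n σ⁻¹ := by
  ext x u
  simp only [permMat, transpose_apply, of_apply, Equiv.Perm.inv_def, Equiv.eq_comp_symm,
    eq_comm]

theorem VL_mul_VR (σ τ : Equiv.Perm (Fin p)) :
    VL d p σ * VR d p τ = permMat d p σ ⊗ₖ permMat d p τ := by
  rw [VL, VR, ← mul_kronecker_mul, mul_one, one_mul]

theorem VL_mul_VR_mul_VL_mul_VR (σ τ σ' τ' : Equiv.Perm (Fin p)) :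
    VL d p σ * VR d p τ * (VL d p σ' * VR d p τ') = VL d p (σ * σ') * VR d p (τ * τ') := by
  simp only [VL_mul_VR, ← mul_kronecker_mul, permMat_mul]

theorem VL_mul_VR_transpose (σ τ : Equiv.Perm (Fin p)) :
    (VL d p σ * VR d p τ)ᵀ = VL d p σ⁻¹ * VR d p τ⁻¹ := by
  rw [VL_mul_VR, VL_mul_VR, ← kroneckerMap_transpose, permMat_transpose, permMat_transpose]

theorem pairOp_transpose (S : Finset (Fin p)) : (pairOp d p S)ᵀ = pairOp d p S := by
  ext ⟨x, y⟩ ⟨u, v⟩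
  simp only [pairOp, transpose_apply, of_apply]
  grind

theorem Qop_transpose [NeZero d] (k : ℕ) : (Qop d p k)ᵀ = Qop d p k := by
  unfold Qop
  split_ifs <;> simp only [transpose_sub, transpose_smul, Vop_eq_pairOp, pairOp_transpose]

end Permutations

section Bell

open Finset

variable {d p : ℕ}

/-- The vector `Φ_ρ = ∑_z |z⟩ ⊗ |z ∘ ρ⟩`; `Φ = bell d p 1`. -/
def bell (d p : ℕ) (ρ : Equiv.Perm (Fin p)) : Conf d p × Conf d p → ℂ :=
  fun zw => if zw.2 = zw.1 ∘ ρ then 1 else 0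

theorem bell_apply (ρ : Equiv.Perm (Fin p)) (z w : Conf d p) :
    bell d p ρ (z, w) = if w = z ∘ ρ then 1 else 0 := rfl

theorem bell_one_apply (z w : Conf d p) : bell d p 1 (z, w) = if w = z then 1 else 0 := rfl

theorem pairOp_univ : pairOp d p univ = vecMulVec (bell d p 1) (bell d p 1) := by
  ext ⟨x, y⟩ ⟨u, v⟩
  simp only [pairOp, bell_apply, vecMulVec_apply, Matrix.of_apply, mem_univ, not_true_eq_false,
    forall_const, IsEmpty.forall_iff, implies_true, and_true, Equiv.Perm.coe_one,
    Function.comp_id]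
  simp only [← funext_iff, eq_comm, forall_and, ite_zero_mul_ite_zero, mul_one]

theorem bell_vecMul_apply (ρ : Equiv.Perm (Fin p)) (M : Op d p) (u v : Conf d p) :
    (bell d p ρ ᵥ* M) (u, v) = ∑ z, M (z, z ∘ ρ) (u, v) := by
  simp [vecMul, dotProduct, bell, Fintype.sum_prod_type]

theorem bell_one_vecMul_VL_mul_VR (σ τ : Equiv.Perm (Fin p)) :
    bell d p 1 ᵥ* (VL d p σ * VR d p τ) = bell d p (σ⁻¹ * τ) := by
  ext ⟨u, v⟩
  rw [bell_vecMul_apply, VL_mul_VR]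
  simp only [permMat, bell_apply, kroneckerMap_apply, of_apply, Equiv.Perm.coe_one,
    Function.comp_id, mul_ite, mul_one, mul_zero, Finset.sum_ite_eq', Finset.mem_univ, if_true,
    Equiv.Perm.coe_inv, Equiv.comp_symm_eq, Equiv.Perm.coe_mul, Function.comp_assoc]
  congr

theorem bell_vecMul_pairOp_compl_singleton (ρ : Equiv.Perm (Fin p)) (o : Fin p) :
    (d : ℂ) • (bell d p ρ ᵥ* pairOp d p {o}ᶜ) = (bell d p ρ ⬝ᵥ bell d p 1) • bell d p 1 := by
  have hfix : bell d p ρ ⬝ᵥ bell d p 1 = #{z : Conf d p | z ∘ ρ = z} := by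
    simp [dotProduct, bell, Fintype.sum_prod_type, eq_comm]
  ext ⟨u, v⟩
  rw [Pi.smul_apply, bell_vecMul_apply, hfix]
  simp only [pairOp, Matrix.of_apply, sum_boole, Pi.smul_apply, smul_eq_mul, bell_one_apply,
    Function.comp_apply, mem_compl, mem_singleton, not_not, forall_eq]
  by_cases huv : ∀ j ≠ o, u j = v j
  · have hvu : v = u ↔ u o = v o := by
      refine ⟨fun h => h ▸ rfl, fun h => funext fun j => ?_⟩
      rcases eq_or_ne j o with rfl | hj
      exacts [h.symm, (huv j hj).symm]
    have hcount : d * #{z : Conf d p | (∀ j, ¬j = o → z j = z (ρ j) ∧ u j = v j) ∧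
        z o = u o ∧ z (ρ o) = v o} = if v = u then #{z : Conf d p | z ∘ ρ = z} else 0 := by
      -- `convert` also reconciles the decidability instances of the generic filters
      convert card_mul_card_invariant_off_apply_eq ρ o (u o) (v o) using 2
      · exact (Fintype.card_fin d).symm
      congr 1
      ext z
      simp only [mem_filter, mem_univ, true_and]
      grind
    rw [← Nat.cast_mul, hcount]
    split_ifs <;> simp
  · obtain ⟨j, hj, hne⟩ := not_forall₂.mp huv
    rw [Finset.filter_false_of_mem (fun z _ h => hne (h.1 j hj).2)]
    simp [show v ≠ u from fun h => hne (h ▸ rfl)]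

end Bell

section Orthogonality

open Pointwise

variable {d p : ℕ} [NeZero d]

theorem Vop_self_eq_vecMulVec : Vop d p p = vecMulVec (bell d p 1) (bell d p 1) := by
  rw [Vop_eq_pairOp, ← pairOp_univ]
  congr 1
  ext i
  simp

theorem Vop_pred_eq_pairOp (hp : 0 < p) : Vop d p (p - 1) = pairOp d p {⟨0, hp⟩}ᶜ := by
  rw [Vop_eq_pairOp]
  congr 1
  ext i
  simp only [Finset.mem_filter, Finset.mem_univ, true_and, Finset.mem_compl, Finset.mem_singleton,
    Fin.ext_iff]
  omega

theorem Qop_self_mul_VL_mul_VR_mul_Qop_pred (hp : 0 < p) (σ τ : Equiv.Perm (Fin p)) :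
    Qop d p p * (VL d p σ * VR d p τ) * Qop d p (p - 1) = 0 := by
  have hcontract : bell d p (σ⁻¹ * τ) ᵥ* pairOp d p {⟨0, hp⟩}ᶜ
      = (d : ℂ)⁻¹ • (bell d p (σ⁻¹ * τ) ⬝ᵥ bell d p 1) • bell d p 1 := by
    rw [← bell_vecMul_pairOp_compl_singleton, smul_smul, inv_mul_cancel₀ (NeZero.ne _),
      one_smul]
  rw [Qop, Qop, if_pos rfl, if_neg (by omega), Nat.sub_add_cancel hp, Vop_self_eq_vecMulVec,
    Vop_pred_eq_pairOp hp]
  simp only [smul_mul_assoc, vecMulVec_mul, bell_one_vecMul_VL_mul_VR, mul_sub, mul_smul_comm,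
    vecMul_vecMulVec, hcontract, vecMulVec_smul, smul_smul, ← sub_smul]
  obtain ⟨k, rfl⟩ := Nat.exists_eq_add_one_of_ne_zero hp.ne'
  rw [Nat.add_sub_cancel, sub_eq_zero_of_eq, zero_smul]
  field_simp
  ring

theorem Qop_pred_mul_VL_mul_VR_mul_Qop_self (hp : 0 < p) (σ τ : Equiv.Perm (Fin p)) :
    Qop d p (p - 1) * (VL d p σ * VR d p τ) * Qop d p p = 0 := by
  have h := congrArg transpose (Qop_self_mul_VL_mul_VR_mul_Qop_pred (d := d) hp σ⁻¹ τ⁻¹)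
  rwa [transpose_mul, transpose_mul, VL_mul_VR_transpose, Qop_transpose, Qop_transpose, inv_inv,
    inv_inv, transpose_zero, ← mul_assoc] at h

theorem Mtil_self_mul_Mtil_pred (hp : 0 < p) : Mtil d p p * Mtil d p (p - 1) = ⊥ := by
  rw [Mtil, Mtil, Submodule.span_mul_span, Submodule.span_eq_bot]
  rintro _ ⟨_, ⟨σ, τ, π, ρ, rfl⟩, _, ⟨σ', τ', π', ρ', rfl⟩, rfl⟩
  calc VL d p σ * VR d p τ * Qop d p p * (VL d p π * VR d p ρ) *
        (VL d p σ' * VR d p τ' * Qop d p (p - 1) * (VL d p π' * VR d p ρ'))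
      = VL d p σ * VR d p τ * (Qop d p p * (VL d p π * VR d p ρ * (VL d p σ' * VR d p τ')) *
          Qop d p (p - 1)) * (VL d p π' * VR d p ρ') := by simp only [mul_assoc]
    _ = 0 := by
      rw [VL_mul_VR_mul_VL_mul_VR, Qop_self_mul_VL_mul_VR_mul_Qop_pred hp, mul_zero, zero_mul]

end Orthogonality

/-- `Q^(p) (V_σ V'_τ) Q^(p-1) = 0 = Q^(p-1) (V_σ V'_τ) Q^(p)`, and consequently
the ideals `M̃^(p)` and `M̃^(p-1)` satisfy `M̃^(p) · M̃^(p-1) = 0`. -/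
theorem ideals_orthogonal (d p : ℕ) (hd : 2 ≤ d) (hp : 1 ≤ p) :
    (∀ σ τ : Equiv.Perm (Fin p),
      Qop d p p * (VL d p σ * VR d p τ) * Qop d p (p - 1) = 0 ∧
      Qop d p (p - 1) * (VL d p σ * VR d p τ) * Qop d p p = 0) ∧
    (∀ x ∈ Mtil d p p, ∀ y ∈ Mtil d p (p - 1), x * y = 0) := by
  have : NeZero d := ⟨by omega⟩
  refine ⟨fun σ τ => ⟨Qop_self_mul_VL_mul_VR_mul_Qop_pred hp σ τ,
    Qop_pred_mul_VL_mul_VR_mul_Qop_self hp σ τ⟩, fun x hx y hy => ?_⟩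
  simpa [Mtil_self_mul_Mtil_pred hp] using Submodule.mul_mem_mul hx hy

end WBA
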